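/- Let g : ℝ → ℝ be three times continuously differentiable, let κ ∈ ℝ, and suppose g(0) = 0 and g''(0) = -κ·g'(0). Let s ≠ 0 with 1 - κs/2 ≠ 0, let t ∈ ℝ, and let M be an upper bound for |g'''| on the closed interval containing 0, s, and t. Then |g(t) - (t·(1 - κt/2))/(s·(1 - κs/2))·g(s)| ≤ (M/6)·( |t|³ + |t|·|1 - κt/2|·s²/|1 - κs/2| ). -/

import Mathlib

open Set

/-!
Write `q(x) = x (1 - κ x / 2)`. The hypotheses `g 0 = 0` and `g''(0) = -κ g'(0)` say exactly
that the second-order Taylor polynomial of `g` at `0` is `g'(0) q`, so Taylor's theorem gives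
`|g x - g'(0) q(x)| ≤ M |x|³ / 6` at `x = s` and `x = t`. The reconstruction
`g ↦ q(t)/q(s) · g(s)` reproduces every multiple of `q` exactly, hence its error on `g` is the
Taylor error at `t` plus `|q(t)/q(s)|` times the Taylor error at `s`.
-/

theorem taylorWithinEval_eq_sum_iteratedDeriv {E : Type*} [NormedAddCommGroup E]
    [NormedSpace ℝ E] {f : ℝ → E} {n : ℕ} {s : Set ℝ} {x₀ : ℝ}
    (hs : UniqueDiffOn ℝ s) (hf : ContDiffAt ℝ n f x₀) (hx₀ : x₀ ∈ s) (x : ℝ) :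
    taylorWithinEval f n s x₀ x = ∑ k ∈ Finset.range (n + 1),
      ((k.factorial : ℝ)⁻¹ * (x - x₀) ^ k) • iteratedDeriv k f x₀ := by
  rw [taylor_within_apply]
  refine Finset.sum_congr rfl fun k hk => ?_
  rw [iteratedDerivWithin_eq_iteratedDeriv hs (hf.of_le ?_) hx₀]
  exact_mod_cast Nat.lt_succ_iff.mp (Finset.mem_range.mp hk)

theorem abs_sub_taylor_two_le {f : ℝ → ℝ} (hf : ContDiff ℝ 3 f) {x₀ x M : ℝ}
    (hM : ∀ y ∈ uIcc x₀ x, |deriv (deriv (deriv f)) y| ≤ M) :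
    |f x - (f x₀ + deriv f x₀ * (x - x₀) + deriv (deriv f) x₀ * (x - x₀) ^ 2 / 2)|
      ≤ M * |x - x₀| ^ 3 / 6 := by
  rcases eq_or_ne x₀ x with rfl | hx
  · simp
  obtain ⟨ξ, hξ, hrem⟩ :=
    taylor_mean_remainder_lagrange_iteratedDeriv (n := 2) hx hf.contDiffOn
  have htaylor : taylorWithinEval f 2 (uIcc x₀ x) x₀ x
      = f x₀ + deriv f x₀ * (x - x₀) + deriv (deriv f) x₀ * (x - x₀) ^ 2 / 2 := by
    rw [taylorWithinEval_eq_sum_iteratedDeriv (uniqueDiffOn_uIcc hx)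
      (hf.of_le (by norm_num)).contDiffAt left_mem_uIcc]
    simp only [Finset.sum_range_succ, Finset.sum_range_zero, iteratedDeriv_succ,
      iteratedDeriv_zero, smul_eq_mul]
    push_cast [Nat.factorial]
    ring
  have hbound : |iteratedDeriv 3 f ξ| ≤ M := by
    simpa [iteratedDeriv_succ] using hM ξ (uIoo_subset_uIcc_self hξ)
  have hfactorial : ((2 + 1).factorial : ℝ) = 6 := by norm_num [Nat.factorial]
  rw [← htaylor, hrem, hfactorial, abs_div, abs_mul, abs_pow,
    abs_of_pos (by norm_num : (0 : ℝ) < 6)]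
  gcongr

theorem abs_sub_div_mul_le (u v a p q : ℝ) (hq : q ≠ 0) :
    |u - p / q * v| ≤ |u - a * p| + |p / q| * |v - a * q| := by
  have hexact : u - p / q * v = (u - a * p) - p / q * (v - a * q) := by
    field_simp
    ring
  rw [hexact, ← abs_mul]
  exact abs_sub _ _

/-- One-dimensional form of the third-order ghost value reconstruction: if
`g(0) = 0` and `g''(0) = -κ·g'(0)`, then the ghost value `g(t)` is reconstructed
from the single interior value `g(s)` via
`g(t) ≈ (t(1 - κt/2))/(s(1 - κs/2))·g(s)`, with error controlled by the third
derivative. -/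
theorem ghost_value_reconstruction
    (g : ℝ → ℝ) (hg : ContDiff ℝ 3 g) (κ : ℝ)
    (h0 : g 0 = 0) (h2 : deriv (deriv g) 0 = -κ * deriv g 0)
    (s : ℝ) (hs : s ≠ 0) (hκs : 1 - κ * s / 2 ≠ 0) (t : ℝ)
    (M : ℝ)
    (hM : ∀ x ∈ Icc (min 0 (min s t)) (max 0 (max s t)),
      |deriv (deriv (deriv g)) x| ≤ M) :
    |g t - (t * (1 - κ * t / 2)) / (s * (1 - κ * s / 2)) * g s|
      ≤ (M / 6) * (|t| ^ 3 + |t| * |1 - κ * t / 2| * s ^ 2 / |1 - κ * s / 2|) := by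
  have taylor_error (x : ℝ) (hx : x = s ∨ x = t) :
      |g x - deriv g 0 * (x * (1 - κ * x / 2))| ≤ M * |x| ^ 3 / 6 := by
    have hsub : uIcc 0 x ⊆ Icc (min 0 (min s t)) (max 0 (max s t)) :=
      uIcc_subset_Icc (by simp) (by rcases hx with rfl | rfl <;> simp)
    have := abs_sub_taylor_two_le hg fun y hy => hM y (hsub hy)
    rwa [h0, h2, sub_zero, show 0 + deriv g 0 * x + -κ * deriv g 0 * x ^ 2 / 2
      = deriv g 0 * (x * (1 - κ * x / 2)) by ring] at this
  calc _ ≤ _ := abs_sub_div_mul_le _ _ (deriv g 0) _ _ (mul_ne_zero hs hκs)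
    _ ≤ M * |t| ^ 3 / 6
        + |t * (1 - κ * t / 2) / (s * (1 - κ * s / 2))| * (M * |s| ^ 3 / 6) := by
      gcongr
      · exact taylor_error t (Or.inr rfl)
      · exact taylor_error s (Or.inl rfl)
    _ = _ := by
      rw [abs_div, abs_mul, abs_mul, pow_succ |s|, sq_abs]
      field_simp
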